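/- Let n ≥ 1, m, k ∈ ℤ, ε = ±1, α ∈ {1,…,n−1}, and let q : ℝ → ℝ^n be a smooth curve with q_n(x) ≠ 0 for all x. Then for every i ∈ {α+1,…,n} the Euler–Lagrange expressions satisfy E_i(L^{n,m,k})[q] = E_{i−α}(L^{n,m+α,k−α})[q] pointwise; equivalently, E_i(L^{n,m,k})[q] = E_{i+α}(L^{n,m−α,k+α})[q] for i = 1,…,n−α. -/

import Mathlib

noncomputable section

/-- Benenti potentials `V_i^{(k)}` for `k ≥ 0`: `Vpos n q k i = V_i^{(k)}(q)` (`i` 1-based),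
with `V_i^{(0)} = δ_{i n}` and `V_i^{(k+1)} = V_{i+1}^{(k)} - q_i V_1^{(k)}`, `V_{n+1}^{(k)} := 0`. -/
def Vpos (n : ℕ) (q : ℕ → ℝ) : ℕ → ℕ → ℝ
  | 0, i => if i = n then 1 else 0
  | k + 1, i => (if i = n then 0 else Vpos n q k (i + 1)) - q i * Vpos n q k 1

/-- Benenti potentials for negative superscripts: `Vneg n q j r = V_r^{(-j)}(q)`, via the
backward recursion `V_r^{(k)} = V_{r-1}^{(k+1)} - (q_{r-1}/q_n) V_n^{(k+1)}`, with
`V_0 := 0` and `q_0 := 1`. -/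
def Vneg (n : ℕ) (q : ℕ → ℝ) : ℕ → ℕ → ℝ
  | 0, r => if r = n then 1 else 0
  | j + 1, r =>
      (if r = 1 then 0 else Vneg n q j (r - 1)) -
        (if r = 1 then 1 else q (r - 1)) / q n * Vneg n q j n

/-- Benenti potential `V_i^{(k)}(q)` for `k : ℤ`, `i` 1-based. -/
def benenti (n : ℕ) (q : ℕ → ℝ) (k : ℤ) (i : ℕ) : ℝ :=
  if 0 ≤ k then Vpos n q k.toNat i else Vneg n q (-k).toNat i

/-- Reindex a vector of `ℝ^n` as a 1-based `ℕ`-indexed family (zero outside `1..n`). -/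
def extQ (n : ℕ) (Q : Fin n → ℝ) : ℕ → ℝ := fun a =>
  if h : 1 ≤ a ∧ a ≤ n then Q ⟨a - 1, by omega⟩ else 0

/-- The Stäckel Lagrangian `L^{n,m,k}(q,q_x) = ¼ ∑_{i,j} V_1^{(2n-m-i-j)}(q) q_{i,x} q_{j,x}
- (ε/4) V_1^{(k)}(q)` (indices 1-based). -/
def Lag (n : ℕ) (m k : ℤ) (ε : ℝ) (Q Qx : Fin n → ℝ) : ℝ :=
  (1 / 4) * ∑ i : Fin n, ∑ j : Fin n,
      benenti n (extQ n Q) (2 * (n : ℤ) - m - (((i : ℕ) : ℤ) + 1) - (((j : ℕ) : ℤ) + 1)) 1 *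
        Qx i * Qx j -
    ε / 4 * benenti n (extQ n Q) k 1

/-- Euler–Lagrange expression `E_i(L)[c](x) = (∂L/∂q_i)(c x, c_x x) - d/dx [(∂L/∂q_{i,x})(c x, c_x x)]`
along a curve `c : ℝ → ℝⁿ`. -/
def EL (n : ℕ) (L : (Fin n → ℝ) → (Fin n → ℝ) → ℝ) (c : ℝ → Fin n → ℝ) (i : Fin n)
    (x : ℝ) : ℝ :=
  fderiv ℝ (fun Q => L Q (deriv c x)) (c x) (Pi.single i 1) -
    deriv (fun y => fderiv ℝ (fun V => L (c y) V) (deriv c y) (Pi.single i 1)) x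

/-!
When `q_n ≠ 0` the forward recursion `V_i^{(s+1)} = V_{i+1}^{(s)} - q_i V_1^{(s)}` holds for every
`s ∈ ℤ`, not only for `s ≥ 0`. Differentiating it shows that the defect of the ladder identity
`∂_j V_i^{(s)} = ∂_{j-1} V_i^{(s-1)} - δ_{ij} V_1^{(s-1)}` (`2 ≤ j ≤ n`) obeys the same recursion
in `s`, whose coefficients are invertible; the defect vanishes at `s = 1`, where all potentials
involved are constant, hence for every `s`. For `i = 1` this gives
`∂_j V_1^{(s)} = ∂_{j-α} V_1^{(s-α)}`, which identifies the position parts of the two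
Euler–Lagrange expressions. Their velocity parts coincide identically, because the superscript
`2n - m - i - j` is unchanged under `(m, i) ↦ (m + α, i - α)`.
-/

open Topology

section Recursion

variable {n : ℕ} {q : ℕ → ℝ}

lemma benenti_zero (i : ℕ) : benenti n q 0 i = if i = n then 1 else 0 := by
  simp [benenti, Vpos]

lemma benenti_of_neg {s : ℤ} (hs : s < 0) (r : ℕ) :
    benenti n q s r = (if r = 1 then 0 else benenti n q (s + 1) (r - 1)) -
      (if r = 1 then 1 else q (r - 1)) / q n * benenti n q (s + 1) n := by
  obtain ⟨j, rfl⟩ : ∃ j : ℕ, s = -(j + 1 : ℕ) := ⟨(-s - 1).toNat, by omega⟩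
  rcases j with _ | j
  · simp [benenti, Vneg, Vpos]
  · have h : -((j + 1 + 1 : ℕ) : ℤ) + 1 = -((j + 1 : ℕ) : ℤ) := by push_cast; ring
    simp only [h, benenti, if_neg (by omega : ¬ (0 : ℤ) ≤ -((j + 1 + 1 : ℕ) : ℤ)),
      if_neg (by omega : ¬ (0 : ℤ) ≤ -((j + 1 : ℕ) : ℤ)), neg_neg, Int.toNat_natCast, Vneg]

lemma benenti_succ_last (hq : q n ≠ 0) (s : ℤ) :
    benenti n q (s + 1) n = -(q n * benenti n q s 1) := by
  rcases lt_or_ge s 0 with hs | hs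
  · rw [benenti_of_neg hs 1, if_pos rfl, if_pos rfl]
    field_simp
    ring
  · simp [benenti, hs, show (0 : ℤ) ≤ s + 1 by omega, show (s + 1).toNat = s.toNat + 1 by omega,
      Vpos]

lemma benenti_succ (hq : q n ≠ 0) (s : ℤ) {i : ℕ} (hi : 1 ≤ i) :
    benenti n q (s + 1) i =
      (if i = n then 0 else benenti n q s (i + 1)) - q i * benenti n q s 1 := by
  by_cases hin : i = n
  · subst hin
    rw [benenti_succ_last hq, if_pos rfl]
    ring
  rw [if_neg hin]
  rcases lt_or_ge s 0 with hs | hs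
  · rw [benenti_of_neg hs (i + 1), if_neg (by omega), if_neg (by omega), Nat.add_sub_cancel,
      benenti_succ_last hq]
    field_simp
    ring
  · simp [benenti, hs, show (0 : ℤ) ≤ s + 1 by omega, show (s + 1).toNat = s.toNat + 1 by omega,
      Vpos, hin]

end Recursion

def benentiFun (n : ℕ) (s : ℤ) (i : ℕ) (Q : Fin n → ℝ) : ℝ := benenti n (extQ n Q) s i

/-- The `j`-th standard basis vector of `ℝ^n`, with `j` 1-based (zero unless `1 ≤ j ≤ n`). -/
def coordVec (n j : ℕ) : Fin n → ℝ := fun t => if (t : ℕ) + 1 = j then 1 else 0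

section Calculus

variable {n : ℕ} {Q : Fin n → ℝ}

lemma coordVec_val_succ (i : Fin n) : coordVec n ((i : ℕ) + 1) = Pi.single i 1 := by
  ext t
  simp [coordVec, Pi.single_apply, Fin.ext_iff]

lemma extQ_apply_of_mem {a : ℕ} (ha : 1 ≤ a) (han : a ≤ n) :
    extQ n Q a = Q ⟨a - 1, by omega⟩ := by
  simp [extQ, ha, han]

lemma differentiable_extQ (a : ℕ) : Differentiable ℝ fun Q : Fin n → ℝ => extQ n Q a := by
  by_cases ha : 1 ≤ a ∧ a ≤ n
  · simp only [extQ_apply_of_mem ha.1 ha.2]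
    fun_prop
  · simp only [extQ, ha, dite_false]
    fun_prop

lemma fderiv_extQ_coordVec {a : ℕ} (ha : 1 ≤ a) (han : a ≤ n) (j : ℕ) :
    fderiv ℝ (fun Q : Fin n → ℝ => extQ n Q a) Q (coordVec n j) = if a = j then 1 else 0 := by
  simp only [extQ_apply_of_mem ha han]
  rw [fderiv_apply differentiableAt_id]
  simp [coordVec, show a - 1 + 1 = a by omega]

lemma differentiable_Vpos (k i : ℕ) :
    Differentiable ℝ fun Q : Fin n → ℝ => Vpos n (extQ n Q) k i := by
  induction k generalizing i with
  | zero => simp only [Vpos]; fun_prop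
  | succ k ih =>
    have hext := differentiable_extQ (n := n) i
    have ih1 := ih 1
    have ihi := ih (i + 1)
    simp only [Vpos]
    split_ifs <;> fun_prop

lemma differentiableAt_Vneg (hQ : extQ n Q n ≠ 0) (j r : ℕ) :
    DifferentiableAt ℝ (fun Q : Fin n → ℝ => Vneg n (extQ n Q) j r) Q := by
  induction j generalizing r with
  | zero => simp only [Vneg]; fun_prop
  | succ j ih =>
    simp only [Vneg]
    have hext (a : ℕ) := differentiable_extQ (n := n) a
    have ihn := ih n
    have ihr := ih (r - 1)
    split_ifs <;> fun_prop (disch := exact hQ)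

lemma differentiableAt_benentiFun (hQ : extQ n Q n ≠ 0) (s : ℤ) (i : ℕ) :
    DifferentiableAt ℝ (benentiFun n s i) Q := by
  unfold benentiFun benenti
  split_ifs
  exacts [differentiable_Vpos _ _ Q, differentiableAt_Vneg hQ _ _]

lemma benentiFun_succ_eventuallyEq (hQ : extQ n Q n ≠ 0) (s : ℤ) {i : ℕ} (hi : 1 ≤ i) :
    benentiFun n (s + 1) i =ᶠ[𝓝 Q] fun Q' =>
      (if i = n then 0 else benentiFun n s (i + 1) Q') - extQ n Q' i * benentiFun n s 1 Q' := by
  filter_upwards [(differentiable_extQ n).continuous.continuousAt.eventually_ne hQ] with Q' hQ'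
  exact benenti_succ hQ' s hi

lemma fderiv_benentiFun_succ (hQ : extQ n Q n ≠ 0) (s : ℤ) {i : ℕ} (hi : 1 ≤ i) (hin : i ≤ n)
    (j : ℕ) :
    fderiv ℝ (benentiFun n (s + 1) i) Q (coordVec n j) =
      (if i = n then 0 else fderiv ℝ (benentiFun n s (i + 1)) Q (coordVec n j)) -
        ((if i = j then benentiFun n s 1 Q else 0) +
          extQ n Q i * fderiv ℝ (benentiFun n s 1) Q (coordVec n j)) := by
  have hprod : fderiv ℝ (fun Q' => extQ n Q' i * benentiFun n s 1 Q') Q (coordVec n j) =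
      (if i = j then benentiFun n s 1 Q else 0) +
        extQ n Q i * fderiv ℝ (benentiFun n s 1) Q (coordVec n j) := by
    rw [fderiv_fun_mul (differentiable_extQ i Q) (differentiableAt_benentiFun hQ s 1)]
    simp only [add_apply, smul_apply, smul_eq_mul, fderiv_extQ_coordVec hi hin, mul_ite, mul_one,
      mul_zero]
    ring
  have hmul := (differentiable_extQ i Q).fun_mul (differentiableAt_benentiFun hQ s 1)
  rw [(benentiFun_succ_eventuallyEq hQ s hi).fderiv_eq]
  by_cases h : i = n
  · simp only [if_pos h]
    rw [fderiv_fun_sub (differentiableAt_const _) hmul]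
    simp [hprod]
  · simp only [if_neg h]
    rw [fderiv_fun_sub (differentiableAt_benentiFun hQ s (i + 1)) hmul]
    simp [hprod]

/-- The defect of the ladder identity `∂_j V_i^{(s)} = ∂_{j-1} V_i^{(s-1)} - δ_{ij} V_1^{(s-1)}`. -/
def ladderDefect (n : ℕ) (s : ℤ) (j i : ℕ) (Q : Fin n → ℝ) : ℝ :=
  fderiv ℝ (benentiFun n s i) Q (coordVec n j) -
    fderiv ℝ (benentiFun n (s - 1) i) Q (coordVec n (j - 1)) +
      if i = j then benentiFun n (s - 1) 1 Q else 0

lemma ladderDefect_succ (hQ : extQ n Q n ≠ 0) (s : ℤ) {i j : ℕ} (hi : 1 ≤ i) (hin : i ≤ n)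
    (hj : 2 ≤ j) (hjn : j ≤ n) :
    ladderDefect n (s + 1) j i Q =
      (if i = n then 0 else ladderDefect n s j (i + 1) Q) - extQ n Q i * ladderDefect n s j 1 Q := by
  have h1 := fderiv_benentiFun_succ hQ s hi hin j
  have h2 := fderiv_benentiFun_succ hQ (s - 1) hi hin (j - 1)
  rw [sub_add_cancel] at h2
  simp only [ladderDefect, add_sub_cancel_right, h1, h2]
  split_ifs <;> first | (exfalso; omega) | ring

lemma ladderDefect_one {i j : ℕ} (hj : 2 ≤ j) (hjn : j ≤ n) : ladderDefect n 1 j i Q = 0 := by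
  have hV0 (r : ℕ) : benentiFun n 0 r = fun _ => if r = n then 1 else 0 :=
    funext fun _ => benenti_zero r
  have hV1 : benentiFun n 1 i = fun _ => if i = n then 0 else if i + 1 = n then 1 else 0 := by
    ext Q'
    simp [benentiFun, benenti, Vpos, show 1 ≠ n by omega]
  simp [ladderDefect, hV0, hV1, show 1 ≠ n by omega]

lemma ladderDefect_eq_zero (hQ : extQ n Q n ≠ 0) (s : ℤ) {j : ℕ} (hj : 2 ≤ j) (hjn : j ≤ n) :
    ∀ i, 1 ≤ i → i ≤ n → ladderDefect n s j i Q = 0 := by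
  induction s using Int.inductionOn' (b := 1) with
  | zero => exact fun i _ _ => ladderDefect_one hj hjn
  | succ k _ ih =>
    intro i hi hin
    rw [ladderDefect_succ hQ k hi hin hj hjn, ih 1 le_rfl (by omega), mul_zero, sub_zero]
    split_ifs
    exacts [rfl, ih (i + 1) (by omega) (by omega)]
  | pred k _ ih =>
    have hstep := fun {i} hi hin => ladderDefect_succ hQ (k - 1) (i := i) hi hin hj hjn
    simp only [sub_add_cancel] at hstep
    have hfirst : ladderDefect n (k - 1) j 1 Q = 0 := by
      have h := hstep (i := n) (by omega) le_rfl
      rw [ih n (by omega) le_rfl, if_pos rfl, zero_sub, zero_eq_neg] at h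
      exact (mul_eq_zero.mp h).resolve_left hQ
    intro i hi hin
    rcases eq_or_lt_of_le hi with rfl | hi2
    · exact hfirst
    · have h := hstep (i := i - 1) (by omega) (by omega)
      rwa [ih (i - 1) (by omega) (by omega), if_neg (by omega), hfirst, mul_zero, sub_zero,
        Nat.sub_add_cancel hi, eq_comm] at h

lemma fderiv_benentiFun_one_coordVec (hQ : extQ n Q n ≠ 0) (s : ℤ) {j : ℕ} (hj : 2 ≤ j)
    (hjn : j ≤ n) :
    fderiv ℝ (benentiFun n s 1) Q (coordVec n j) =
      fderiv ℝ (benentiFun n (s - 1) 1) Q (coordVec n (j - 1)) := by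
  have h := ladderDefect_eq_zero hQ s hj hjn 1 le_rfl (by omega)
  rw [ladderDefect, if_neg (by omega), add_zero, sub_eq_zero] at h
  exact h

lemma fderiv_benentiFun_one_coordVec_sub (hQ : extQ n Q n ≠ 0) (s : ℤ) {β j : ℕ} (hβj : β < j)
    (hjn : j ≤ n) :
    fderiv ℝ (benentiFun n s 1) Q (coordVec n j) =
      fderiv ℝ (benentiFun n (s - β) 1) Q (coordVec n (j - β)) := by
  induction β generalizing s j with
  | zero => simp
  | succ β ih =>
    rw [fderiv_benentiFun_one_coordVec hQ s (by omega) hjn, ih (s - 1) (by omega) (by omega),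
      show s - 1 - β = s - (β + 1 : ℕ) by push_cast; ring, Nat.sub_sub, Nat.add_comm 1]

lemma fderiv_lag_position (hQ : extQ n Q n ≠ 0) (m k : ℤ) (ε : ℝ)
    (W v : Fin n → ℝ) :
    fderiv ℝ (fun Q => Lag n m k ε Q W) Q v =
      1 / 4 * ∑ a : Fin n, ∑ b : Fin n,
        fderiv ℝ (benentiFun n (2 * (n : ℤ) - m - (((a : ℕ) : ℤ) + 1) - (((b : ℕ) : ℤ) + 1)) 1) Q v *
          W a * W b -
        ε / 4 * fderiv ℝ (benentiFun n k 1) Q v := by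
  have hF (s : ℤ) := (differentiableAt_benentiFun hQ s 1).hasFDerivAt
  have hLag := ((HasFDerivAt.fun_sum (u := .univ) fun (a : Fin n) _ =>
    HasFDerivAt.fun_sum (u := .univ) fun (b : Fin n) _ =>
    ((hF (2 * (n : ℤ) - m - (((a : ℕ) : ℤ) + 1) - (((b : ℕ) : ℤ) + 1))).mul_const (W a)).mul_const
      (W b)).const_mul (1 / 4 : ℝ)).fun_sub ((hF k).const_mul (ε / 4))
  rw [HasFDerivAt.fderiv (f := fun Q => Lag n m k ε Q W) hLag]
  simp [Finset.mul_sum, mul_comm, mul_left_comm]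

lemma fderiv_sum_sum_mul_mul_single (c : Fin n → Fin n → ℝ) (W : Fin n → ℝ) (i : Fin n) :
    fderiv ℝ (fun V : Fin n → ℝ => ∑ a, ∑ b, c a b * V a * V b) W (Pi.single i 1) =
      ∑ b, c i b * W b + ∑ a, c a i * W a := by
  have hc := HasFDerivAt.fun_sum (u := .univ) fun (a : Fin n) _ =>
    HasFDerivAt.fun_sum (u := .univ) fun (b : Fin n) _ =>
    ((hasFDerivAt_apply (𝕜 := ℝ) a W).const_mul (c a b)).mul (hasFDerivAt_apply (𝕜 := ℝ) b W)
  rw [HasFDerivAt.fderiv (f := fun V : Fin n → ℝ => ∑ a, ∑ b, c a b * V a * V b) hc]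
  simp [Pi.single_apply, Finset.sum_add_distrib, add_comm, mul_comm]

lemma fderiv_lag_velocity (m k : ℤ) (ε : ℝ) (Q W : Fin n → ℝ) (i : Fin n) :
    fderiv ℝ (fun V => Lag n m k ε Q V) W (Pi.single i 1) =
      1 / 4 * (∑ b : Fin n,
          benentiFun n (2 * (n : ℤ) - m - (((i : ℕ) : ℤ) + 1) - (((b : ℕ) : ℤ) + 1)) 1 Q * W b +
        ∑ a : Fin n,
          benentiFun n (2 * (n : ℤ) - m - (((a : ℕ) : ℤ) + 1) - (((i : ℕ) : ℤ) + 1)) 1 Q * W a) := by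
  unfold Lag
  rw [fderiv_sub_const, fderiv_const_mul (by fun_prop), smul_apply, smul_eq_mul]
  exact congrArg _ (fderiv_sum_sum_mul_mul_single _ W i)

lemma EL_lag_eq_of_add_eq {q : ℝ → Fin n → ℝ} (hq : ∀ x, extQ n (q x) n ≠ 0) (m k : ℤ) (ε : ℝ)
    {α : ℕ} {i j : Fin n} (hij : (j : ℕ) + α = i) (x : ℝ) :
    EL n (Lag n m k ε) q i x = EL n (Lag n (m + α) (k - α) ε) q j x := by
  have hshift (s : ℤ) : fderiv ℝ (benentiFun n s 1) (q x) (Pi.single i 1) =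
      fderiv ℝ (benentiFun n (s - α) 1) (q x) (Pi.single j 1) := by
    rw [← coordVec_val_succ, ← coordVec_val_succ,
      fderiv_benentiFun_one_coordVec_sub (hq x) s (β := α) (by omega) (by omega)]
    congr 2
    omega
  have hm (a b : Fin n) : 2 * (n : ℤ) - m - (((a : ℕ) : ℤ) + 1) - (((b : ℕ) : ℤ) + 1) - α =
      2 * (n : ℤ) - (m + α) - (((a : ℕ) : ℤ) + 1) - (((b : ℕ) : ℤ) + 1) := by ring
  have hvel : (fun y => fderiv ℝ (fun V => Lag n m k ε (q y) V) (deriv q y) (Pi.single i 1)) =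
      fun y => fderiv ℝ (fun V => Lag n (m + α) (k - α) ε (q y) V) (deriv q y) (Pi.single j 1) := by
    funext y
    simp only [fderiv_lag_velocity, ← hij]
    push_cast
    ring_nf
  unfold EL
  rw [hvel, fderiv_lag_position (hq x), fderiv_lag_position (hq x)]
  simp only [hshift, hm]

end Calculus

theorem euler_lagrange_ladder_symmetry (n : ℕ) (hn : 1 ≤ n) (m k : ℤ) (ε : ℝ)
    (α : ℕ) (q : ℝ → Fin n → ℝ)
    (hqn : ∀ x, q x ⟨n - 1, by omega⟩ ≠ 0) :
    (∀ i : Fin n, α ≤ (i : ℕ) → ∀ x : ℝ,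
      EL n (Lag n m k ε) q i x =
        EL n (Lag n (m + (α : ℤ)) (k - (α : ℤ)) ε) q
          ⟨(i : ℕ) - α, Nat.lt_of_le_of_lt (Nat.sub_le _ _) i.isLt⟩ x) ∧
    (∀ i : Fin n, (h : (i : ℕ) + 1 + α ≤ n) → ∀ x : ℝ,
      EL n (Lag n m k ε) q i x =
        EL n (Lag n (m - (α : ℤ)) (k + (α : ℤ)) ε) q ⟨(i : ℕ) + α, by omega⟩ x) := by
  have hq (x : ℝ) : extQ n (q x) n ≠ 0 := by
    rw [extQ_apply_of_mem hn le_rfl]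
    exact hqn x
  refine ⟨fun i hi x => EL_lag_eq_of_add_eq hq m k ε (Nat.sub_add_cancel hi) x, fun i h x => ?_⟩
  simpa using (EL_lag_eq_of_add_eq hq (m - α) (k + α) ε (i := ⟨i + α, by omega⟩) rfl x).symm
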